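/- arXiv:1305.2463 — 3 statements merged into one kernel-verified Lean document; each statement's English description precedes it below -/
import Mathlib

section
/- Let P0, P1 : ℝ → ℝ³ be differentiable curves with P1(t) ≠ 0 for every t, and let N(s,t) = P1(t) ×₃ (P0'(t) + s • P1'(t)) denote the normal vector of the ruled surface P(s,t) = P0(t) + s • P1(t). Then N(s,t) ×₃ N(s',t) = 0 for all s, s', t (i.e. the normal direction is constant along every ruling, the developability condition) if and only if, for every t, the determinant of the 3×3 matrix with rows P0'(t), P1(t), P1'(t) vanishes. -/
open Matrix

section CrossProduct

variable {R : Type*} [CommRing R]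

theorem cross_cross_cross_left (a u v : Fin 3 → R) :
    (a ⨯₃ u) ⨯₃ (a ⨯₃ v) = (a ⬝ᵥ u ⨯₃ v) • a := by
  rw [cross_cross_eq_smul_sub_smul, dot_self_cross, zero_smul, zero_sub,
    triple_product_permutation, ← cross_anticomm, dotProduct_neg, neg_smul, neg_neg]

theorem add_smul_cross_add_smul (b c : Fin 3 → R) (s s' : R) :
    (b + s • c) ⨯₃ (b + s' • c) = (s' - s) • b ⨯₃ c := by
  simp only [map_add, LinearMap.add_apply, map_smul, LinearMap.smul_apply, cross_self,
    ← cross_anticomm c b]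
  module

theorem cross_add_smul_cross_cross_add_smul (a b c : Fin 3 → R) (s s' : R) :
    (a ⨯₃ (b + s • c)) ⨯₃ (a ⨯₃ (b + s' • c)) = ((s - s') * (Matrix.of ![b, a, c]).det) • a := by
  rw [cross_cross_cross_left, add_smul_cross_add_smul, dotProduct_smul, triple_product_permutation,
    ← cross_anticomm, dotProduct_neg, triple_product_eq_det, smul_eq_mul]
  change _ = ((s - s') * det ![b, a, c]) • a
  congr 1
  ring

end CrossProduct

theorem ruled_developable_iff_triple_det_eq_zero_general
    (P0 P1 : ℝ → Fin 3 → ℝ)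
    (hP1ne : ∀ t, P1 t ≠ 0)
    (N : ℝ → ℝ → Fin 3 → ℝ)
    (hN : ∀ s t, N s t = P1 t ⨯₃ (deriv P0 t + s • deriv P1 t)) :
    (∀ s s' t, N s t ⨯₃ N s' t = 0) ↔
      ∀ t, (Matrix.of ![deriv P0 t, P1 t, deriv P1 t]).det = 0 := by
  simp only [hN, cross_add_smul_cross_cross_add_smul]
  constructor
  · intro h t
    simpa [hP1ne t] using h 1 0 t
  · intro h s s' t
    rw [h t, mul_zero, zero_smul]

/-- Developability criterion (Lemma 2.1).  Let `P0, P1 : ℝ → ℝ³` be differentiable curves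
with `P1 t ≠ 0` for every `t`, and let `N s t = P1 t ×₃ (P0' t + s • P1' t)` denote the
normal vector of the ruled surface `P(s,t) = P0 t + s • P1 t`.  Then
`N s t ×₃ N s' t = 0` for all `s, s', t` (the normal direction is constant along every
ruling) if and only if, for every `t`, the determinant of the `3×3` matrix with rows
`P0' t, P1 t, P1' t` vanishes. -/
theorem ruled_developable_iff_triple_det_eq_zero
    (P0 P1 : ℝ → Fin 3 → ℝ) (hP0 : Differentiable ℝ P0) (hP1 : Differentiable ℝ P1)
    (hP1ne : ∀ t, P1 t ≠ 0)
    (N : ℝ → ℝ → Fin 3 → ℝ)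
    (hN : ∀ s t, N s t = P1 t ⨯₃ (deriv P0 t + s • deriv P1 t)) :
    (∀ s s' t, N s t ⨯₃ N s' t = 0) ↔
      ∀ t, (Matrix.of ![deriv P0 t, P1 t, deriv P1 t]).det = 0 :=
  ruled_developable_iff_triple_det_eq_zero_general P0 P1 hP1ne N hN
end

section
/- Let P0 ∈ ℝ³, let L : ℝ³ →ₗ[ℝ] ℝ be a linear functional and c ∈ ℝ with L(P0) ≠ c, and let C : ℝ → ℝ³ be an injective curve with L(C(t)) = c for all t (so the curve C lies in a plane not passing through P0). Define Φ(s,t) = (1 − s) • P0 + s • C(t) and let S = {P0 + s • (x − P0) : s ∈ ℝ, x ∈ Set.range C} be the cone with apex P0 over the curve C. Then Φ restricted to {(s,t) ∈ ℝ × ℝ : s ≠ 0} is a bijection onto S \ {P0}; in particular Φ is an injective (proper) parametrization of the conical surface away from the apex. -/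
/-!
A point of the cone other than the apex `p` lies on a unique generator `lineMap p x s` with
`s ≠ 0`: an affine functional `f` that is constant `c ≠ f p` on the directrix takes the value
`lineMap (f p) c s` there, which recovers `s`, and for `s ≠ 0` the homothety of ratio `s`
about `p` is injective, which recovers `x`.
-/

open AffineMap Set

variable {k V P ι : Type*} [Field k] [AddCommGroup V] [Module k V] [AddTorsor V P]

variable (k) in
def cone (p : P) (S : Set P) : Set P :=
  {y | ∃ s : k, ∃ x ∈ S, y = lineMap p x s}

theorem lineMap_inj_of_apply_eq {f : P →ᵃ[k] k} {c : k} {p x y : P} {s s' : k}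
    (hp : f p ≠ c) (hx : f x = c) (hy : f y = c) (hs : s ≠ 0)
    (h : lineMap p x s = lineMap p y s') : s = s' ∧ x = y := by
  have hs' : s = s' := by
    apply lineMap_injective k hp
    simpa only [apply_lineMap, hx, hy] using congrArg f h
  subst hs'
  exact ⟨rfl, homothety_injective p hs h⟩

theorem bijOn_lineMap_cone {f : P →ᵃ[k] k} {c : k} {p : P} {C : ι → P} (hp : f p ≠ c)
    (hC_inj : Function.Injective C) (hC : ∀ t, f (C t) = c) :
    BijOn (fun q : k × ι => lineMap p (C q.2) q.1) {q | q.1 ≠ 0}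
      (cone k p (range C) \ {p}) := by
  have hpC : ∀ t, p ≠ C t := fun t h => hp (h ▸ hC t)
  refine ⟨?_, ?_, ?_⟩
  · rintro ⟨s, t⟩ (hs : s ≠ 0)
    refine ⟨⟨s, C t, mem_range_self t, rfl⟩, ?_⟩
    rw [mem_singleton_iff, lineMap_eq_left_iff]
    exact not_or.mpr ⟨hpC t, hs⟩
  · rintro ⟨s, t⟩ (hs : s ≠ 0) ⟨s', t'⟩ - h
    obtain ⟨rfl, hCt⟩ := lineMap_inj_of_apply_eq hp (hC t) (hC t') hs h
    rw [hC_inj hCt]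
  · rintro y ⟨⟨s, _, ⟨t, rfl⟩, rfl⟩, hy⟩
    have hs : s ≠ 0 := by
      rintro rfl
      exact hy (lineMap_apply_zero _ _)
    exact ⟨(s, t), hs, rfl⟩

/-- Sufficiency direction of Lemma 3.2.  Let `P0 ∈ ℝ³`, let `L` be a linear functional and
`c ∈ ℝ` with `L P0 ≠ c`, and let `C : ℝ → ℝ³` be an injective curve with `L (C t) = c` for
all `t` (so `C` lies in a plane not through `P0`).  Define `Φ(s,t) = (1-s) • P0 + s • C t`
and let `S` be the cone with apex `P0` over `C`.  Then `Φ` restricted to `{(s,t) : s ≠ 0}`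
is a bijection onto `S \ {P0}`. -/
theorem conical_parametrization_proper
    (P0 : Fin 3 → ℝ) (L : (Fin 3 → ℝ) →ₗ[ℝ] ℝ) (c : ℝ) (hL : L P0 ≠ c)
    (C : ℝ → Fin 3 → ℝ) (hCinj : Function.Injective C) (hC : ∀ t, L (C t) = c) :
    Set.BijOn (fun p : ℝ × ℝ => (1 - p.1) • P0 + p.1 • C p.2)
      {p : ℝ × ℝ | p.1 ≠ 0}
      ({y | ∃ s : ℝ, ∃ x ∈ Set.range C, y = P0 + s • (x - P0)} \ {P0}) := by
  have hcone :
      {y | ∃ s : ℝ, ∃ x ∈ Set.range C, y = P0 + s • (x - P0)} = cone ℝ P0 (range C) := by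
    simp only [cone, lineMap_apply_module', add_comm P0]
  simp_rw [← lineMap_apply_module, hcone]
  exact bijOn_lineMap_cone (f := L.toAffineMap) hL hCinj hC
end

section
/- Let P0 ∈ ℝ³ and P1 : ℝ → ℝ³, and consider the conical parametrization Φ(s,t) = P0 + s • P1(t). Let L : ℝ³ →ₗ[ℝ] ℝ be a linear functional and c ∈ ℝ with L(P0) ≠ c. Then for every t with L(P1(t)) ≠ 0: (i) setting q(t) = (c − L(P0)) / L(P1(t)), one has L(Φ(q(t), t)) = c, and q(t) is the unique s ∈ ℝ with L(Φ(s,t)) = c; (ii) q(t) ≠ 0; and (iii) if Φ is injective on {(s,t) : s ≠ 0}, then the plane-section curve t ↦ Φ(q(t), t) is injective on {t : L(P1(t)) ≠ 0}. -/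
theorem LinearMap.apply_add_smul_eq_iff {K M : Type*} [Field K] [AddCommGroup M] [Module K M]
    (L : M →ₗ[K] K) {x v : M} (hv : L v ≠ 0) (s c : K) :
    L (x + s • v) = c ↔ s = (c - L x) / L v := by
  rw [map_add, map_smul, smul_eq_mul, eq_div_iff hv, eq_sub_iff_add_eq']

theorem Set.InjOn.comp_graph {α β γ : Type*} {f : α × β → γ} {u : Set (α × β)}
    (hf : Set.InjOn f u) {q : β → α} {s : Set β} (hq : Set.MapsTo (fun t => (q t, t)) s u) :
    Set.InjOn (fun t => f (q t, t)) s :=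
  hf.comp (fun _ _ _ _ h => congrArg Prod.snd h) hq

/-- Necessity direction of Lemma 3.2.  Let `P0 ∈ ℝ³`, `P1 : ℝ → ℝ³`, and consider the
conical parametrization `Φ(s,t) = P0 + s • P1 t`.  Let `L` be a linear functional and
`c ∈ ℝ` with `L P0 ≠ c`.  Then for every `t` with `L (P1 t) ≠ 0`: (i) with
`q t = (c - L P0) / L (P1 t)` one has `L (Φ (q t) t) = c`, and `q t` is the unique such
parameter value; (ii) `q t ≠ 0`; and (iii) if `Φ` is injective on `{(s,t) : s ≠ 0}`, then
the plane-section curve `t ↦ Φ (q t) t` is injective on `{t : L (P1 t) ≠ 0}`. -/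
theorem conical_plane_section_proper
    (P0 : Fin 3 → ℝ) (P1 : ℝ → Fin 3 → ℝ)
    (L : (Fin 3 → ℝ) →ₗ[ℝ] ℝ) (c : ℝ) (hL : L P0 ≠ c) :
    (∀ t : ℝ, L (P1 t) ≠ 0 →
      L (P0 + ((c - L P0) / L (P1 t)) • P1 t) = c ∧
      ∀ s : ℝ, L (P0 + s • P1 t) = c → s = (c - L P0) / L (P1 t)) ∧
    (∀ t : ℝ, L (P1 t) ≠ 0 → (c - L P0) / L (P1 t) ≠ 0) ∧
    (Set.InjOn (fun p : ℝ × ℝ => P0 + p.1 • P1 p.2) {p : ℝ × ℝ | p.1 ≠ 0} →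
      Set.InjOn (fun t : ℝ => P0 + ((c - L P0) / L (P1 t)) • P1 t)
        {t : ℝ | L (P1 t) ≠ 0}) := by
  have hq : ∀ t : ℝ, L (P1 t) ≠ 0 → (c - L P0) / L (P1 t) ≠ 0 := fun _ ht =>
    div_ne_zero (sub_ne_zero.mpr hL.symm) ht
  refine ⟨fun t ht => ⟨(L.apply_add_smul_eq_iff ht _ c).mpr rfl,
    fun s => (L.apply_add_smul_eq_iff ht s c).mp⟩, hq, fun hinj => hinj.comp_graph hq⟩
end
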